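/- Let N ≥ 2, 0 < ε < π/2, and let α, β ∈ ℝ satisfy α > 0, α + β > 0 and β ≠ 0; set c₀ = (α+β)^{−1} − α^{−1} (which is nonzero). Then there exists r > 0, depending only on ε, α, β, such that for every λ ∈ Σ_ε and every nonzero ξ' ∈ ℝ^{N−1} with |λ| ≤ r|ξ'|²: |𝓛| ≥ |c₀| |λ| |ξ'|². -/

import Mathlib

lemma my_sqrt_sq (z : ℂ) : (z ^ (1/2 : ℂ)) ^ 2 = z := by
  have h : (1/2 : ℂ) = ((2:ℕ) : ℂ)⁻¹ := by norm_num
  rw [h]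
  exact Complex.cpow_nat_inv_pow z two_ne_zero

lemma my_sqrt_re_nonneg (z : ℂ) : 0 ≤ (z ^ (1/2 : ℂ)).re := by
  rcases eq_or_ne z 0 with rfl | hz
  · rw [Complex.zero_cpow (by norm_num)]; simp
  · rw [Complex.cpow_def_of_ne_zero hz, Complex.exp_re]
    have him : (Complex.log z * (1/2)).im = Complex.arg z / 2 := by
      simp [Complex.mul_im, Complex.log_im]; ring
    rw [him]
    have h1 := Complex.arg_le_pi z
    have h2 := Complex.neg_pi_lt_arg z
    apply mul_nonneg (Real.exp_nonneg _)
    apply Real.cos_nonneg_of_mem_Icc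
    constructor <;> [linarith; linarith]



/-- The characteristic root `A = ((α+β)⁻¹ λ + |ξ'|²)^{1/2}` (principal square root),
written as a function of `|ξ'|`. -/
noncomputable def lameA (α β : ℝ) (l : ℂ) (x : ℝ) : ℂ :=
  (((α + β : ℝ) : ℂ)⁻¹ * l + (x : ℂ) ^ 2) ^ (1 / 2 : ℂ)

/-- The characteristic root `B = (α⁻¹ λ + |ξ'|²)^{1/2}` (principal square root),
written as a function of `|ξ'|`. -/
noncomputable def lameB (α : ℝ) (l : ℂ) (x : ℝ) : ℂ :=
  ((α : ℂ)⁻¹ * l + (x : ℂ) ^ 2) ^ (1 / 2 : ℂ)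

/-- The Lopatinskii determinant `𝓛 = 4AB|ξ'|² − (B² + |ξ'|²)²`. -/
noncomputable def lopDet (α β : ℝ) (l : ℂ) (x : ℝ) : ℂ :=
  4 * lameA α β l x * lameB α l x * (x : ℂ) ^ 2 -
    (lameB α l x ^ 2 + (x : ℂ) ^ 2) ^ 2

/-- lower bound `|𝓛| ≥ |c₀||λ||ξ'|²` with `c₀ = (α+β)⁻¹ − α⁻¹ ≠ 0`
in the regime `|λ| ≤ r|ξ'|²`. -/
theorem lopatinskii_lower_bound_small_lambda
    (N : ℕ) (hN : 2 ≤ N) (ε α β : ℝ)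
    (hε0 : 0 < ε) (hε1 : ε < Real.pi / 2) (hα : 0 < α) (hαβ : 0 < α + β)
    (hβ : β ≠ 0) :
    (α + β)⁻¹ - α⁻¹ ≠ 0 ∧
    ∃ r : ℝ, 0 < r ∧
      ∀ l : ℂ, l ≠ 0 → |Complex.arg l| ≤ Real.pi - ε →
        ∀ ξ' : EuclideanSpace ℝ (Fin (N - 1)), ξ' ≠ 0 →
          ‖l‖ ≤ r * ‖ξ'‖ ^ 2 →
          |(α + β)⁻¹ - α⁻¹| * ‖l‖ * ‖ξ'‖ ^ 2 ≤
            ‖(lopDet α β l ‖ξ'‖)‖ := by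
  set a : ℝ := (α + β)⁻¹ with ha_def
  set b : ℝ := α⁻¹ with hb_def
  have ha : 0 < a := inv_pos.mpr hαβ
  have hb : 0 < b := inv_pos.mpr hα
  have hc0 : a - b ≠ 0 := by
    intro h
    have h2 : a = b := by linarith
    have h3 : α + β = α := inv_injective h2
    exact hβ (by linarith)
  have habc : 0 < |a - b| := abs_pos.mpr hc0
  refine ⟨hc0, ?_⟩
  set K : ℝ := 2 * (a - b)^2 + b^2 with hK_def
  have hK : 0 < K := by positivity
  refine ⟨min (|a - b| / K) (min ((2*a)⁻¹) ((2*b)⁻¹)), by positivity, ?_⟩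
  set r : ℝ := min (|a - b| / K) (min ((2*a)⁻¹) ((2*b)⁻¹)) with hr_def
  have hr1 : r ≤ |a - b| / K := min_le_left _ _
  have hr2 : r ≤ (2*a)⁻¹ := le_trans (min_le_right _ _) (min_le_left _ _)
  have hr3 : r ≤ (2*b)⁻¹ := le_trans (min_le_right _ _) (min_le_right _ _)
  have hr0 : 0 < r := by positivity
  have hra : a * r ≤ 1/2 := by
    have h := mul_le_mul_of_nonneg_left hr2 ha.le
    rwa [show a * (2*a)⁻¹ = 1/2 by field_simp] at h
  have hrb : b * r ≤ 1/2 := by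
    have h := mul_le_mul_of_nonneg_left hr3 hb.le
    rwa [show b * (2*b)⁻¹ = 1/2 by field_simp] at h
  have hKr : K * r ≤ |a - b| := by
    have h := mul_le_mul_of_nonneg_left hr1 hK.le
    rwa [show K * (|a - b| / K) = |a - b| by field_simp] at h
  intro l hl harg ξ' hξ hlr
  set x : ℝ := ‖ξ'‖ with hx_def
  have hx : 0 < x := norm_pos_iff.mpr hξ
  have hlre : |l.re| ≤ r * x^2 := (Complex.abs_re_le_norm l).trans hlr
  have hlre' := abs_le.mp hlre
  have hlabs : 0 ≤ ‖l‖ := norm_nonneg l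
  -- the squared roots
  have hA2 : (lameA α β l x)^2 = (a : ℂ) * l + (x : ℂ)^2 := by
    unfold lameA
    rw [my_sqrt_sq]
    rw [ha_def]
    push_cast
    ring
  have hB2 : (lameB α l x)^2 = (b : ℂ) * l + (x : ℂ)^2 := by
    unfold lameB
    rw [my_sqrt_sq]
    rw [hb_def]
    push_cast
    ring
  have hAre : 0 ≤ (lameA α β l x).re := my_sqrt_re_nonneg _
  have hBre : 0 ≤ (lameB α l x).re := my_sqrt_re_nonneg _
  -- real parts of the arguments
  have hZAre : ((a : ℂ) * l + (x : ℂ)^2).re = a * l.re + x^2 := by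
    simp [Complex.add_re, Complex.mul_re, ← Complex.ofReal_pow]
  have hZBre : ((b : ℂ) * l + (x : ℂ)^2).re = b * l.re + x^2 := by
    simp [Complex.add_re, Complex.mul_re, ← Complex.ofReal_pow]
  have hZAre_lb : x^2/2 ≤ ((a : ℂ) * l + (x : ℂ)^2).re := by
    rw [hZAre]
    have f1 := mul_le_mul_of_nonneg_left hlre'.1 ha.le
    have f2 := mul_le_mul_of_nonneg_right hra (sq_nonneg x)
    linarith
  have hZBre_lb : x^2/2 ≤ ((b : ℂ) * l + (x : ℂ)^2).re := by
    rw [hZBre]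
    have f1 := mul_le_mul_of_nonneg_left hlre'.1 hb.le
    have f2 := mul_le_mul_of_nonneg_right hrb (sq_nonneg x)
    linarith
  -- |Im| ≤ Re for A and B
  have hAsq : (lameA α β l x).re^2 - (lameA α β l x).im^2
      = ((a : ℂ) * l + (x : ℂ)^2).re := by
    rw [← hA2, sq (lameA α β l x), Complex.mul_re]; ring
  have hBsq : (lameB α l x).re^2 - (lameB α l x).im^2
      = ((b : ℂ) * l + (x : ℂ)^2).re := by
    rw [← hB2, sq (lameB α l x), Complex.mul_re]; ring
  have hAim : |(lameA α β l x).im| ≤ (lameA α β l x).re := by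
    have him2 : (lameA α β l x).im^2 ≤ (lameA α β l x).re^2 := by
      linarith [hAsq, hZAre_lb, sq_nonneg x]
    calc |(lameA α β l x).im| = Real.sqrt ((lameA α β l x).im^2) :=
          (Real.sqrt_sq_eq_abs _).symm
      _ ≤ Real.sqrt ((lameA α β l x).re^2) := Real.sqrt_le_sqrt him2
      _ = (lameA α β l x).re := Real.sqrt_sq hAre
  have hBim : |(lameB α l x).im| ≤ (lameB α l x).re := by
    have him2 : (lameB α l x).im^2 ≤ (lameB α l x).re^2 := by
      linarith [hBsq, hZBre_lb, sq_nonneg x]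
    calc |(lameB α l x).im| = Real.sqrt ((lameB α l x).im^2) :=
          (Real.sqrt_sq_eq_abs _).symm
      _ ≤ Real.sqrt ((lameB α l x).re^2) := Real.sqrt_le_sqrt him2
      _ = (lameB α l x).re := Real.sqrt_sq hBre
  -- Re(A*B) ≥ 0
  have hSre : 0 ≤ (lameA α β l x * lameB α l x).re := by
    rw [Complex.mul_re]
    have h3 : |(lameA α β l x).im| * |(lameB α l x).im|
        ≤ (lameA α β l x).re * (lameB α l x).re :=
      mul_le_mul hAim hBim (abs_nonneg _) hAre
    have h4 : (lameA α β l x).im * (lameB α l x).im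
        ≤ |(lameA α β l x).im| * |(lameB α l x).im| := by
      rw [← abs_mul]; exact le_abs_self _
    linarith
  -- Re of M
  have hMre : ((x : ℂ)^2 + (((a + b)/2 : ℝ) : ℂ) * l).re = x^2 + (a+b)/2 * l.re := by
    simp [Complex.add_re, Complex.mul_re, ← Complex.ofReal_pow]
  have hMre_lb : x^2/2 ≤ ((x : ℂ)^2 + (((a + b)/2 : ℝ) : ℂ) * l).re := by
    rw [hMre]
    have f1 := mul_le_mul_of_nonneg_left hlre'.1 (by positivity : (0:ℝ) ≤ (a+b)/2)
    have f2 := mul_le_mul_of_nonneg_right hra (sq_nonneg x)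
    have f3 := mul_le_mul_of_nonneg_right hrb (sq_nonneg x)
    linarith
  -- |S + M| ≥ x^2/2
  have hSM_abs : x^2/2 ≤ ‖
      (lameA α β l x * lameB α l x + ((x : ℂ)^2 + (((a + b)/2 : ℝ) : ℂ) * l))‖ := by
    refine le_trans ?_ (Complex.re_le_norm _)
    rw [Complex.add_re]
    linarith
  -- key difference identity
  have hdiff : (lameA α β l x * lameB α l x - ((x : ℂ)^2 + (((a + b)/2 : ℝ) : ℂ) * l))
      * (lameA α β l x * lameB α l x + ((x : ℂ)^2 + (((a + b)/2 : ℝ) : ℂ) * l))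
      = -((((a - b)/2 : ℝ) : ℂ))^2 * l^2 := by
    have hs2 : (lameA α β l x * lameB α l x)^2
        = ((a : ℂ) * l + (x : ℂ)^2) * ((b : ℂ) * l + (x : ℂ)^2) := by
      rw [mul_pow, hA2, hB2]
    push_cast
    push_cast at hs2
    linear_combination hs2
  -- bound on |S - M|
  have h9 : ‖(lameA α β l x * lameB α l x
      - ((x : ℂ)^2 + (((a + b)/2 : ℝ) : ℂ) * l))‖ * (x^2/2)
      ≤ ((a-b)/2)^2 * (‖l‖)^2 := by
    calc ‖(lameA α β l x * lameB α l x
          - ((x : ℂ)^2 + (((a + b)/2 : ℝ) : ℂ) * l))‖ * (x^2/2)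
        ≤ ‖(lameA α β l x * lameB α l x
          - ((x : ℂ)^2 + (((a + b)/2 : ℝ) : ℂ) * l))‖
          * ‖(lameA α β l x * lameB α l x
          + ((x : ℂ)^2 + (((a + b)/2 : ℝ) : ℂ) * l))‖ := by
          exact mul_le_mul_of_nonneg_left hSM_abs (norm_nonneg _)
      _ = ((a-b)/2)^2 * (‖l‖)^2 := by
          rw [← norm_mul, hdiff]
          rw [norm_mul, norm_neg, norm_pow, norm_pow, Complex.norm_real, Real.norm_eq_abs, sq_abs]
  -- identity for lopDet
  have hiden : lopDet α β l x = 2*((a:ℂ)-(b:ℂ))*l*(x:ℂ)^2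
      + (4*(x:ℂ)^2*(lameA α β l x * lameB α l x
          - ((x : ℂ)^2 + (((a + b)/2 : ℝ) : ℂ) * l)) - (b:ℂ)^2*l^2) := by
    unfold lopDet
    push_cast
    linear_combination (-(lameB α l x^2 + ((b:ℂ)*l + (x:ℂ)^2) + 2*(x:ℂ)^2)) * hB2
  -- norm computations
  have hmain_abs : ‖(2*((a:ℂ)-(b:ℂ))*l*(x:ℂ)^2)‖
      = 2 * |a - b| * ‖l‖ * x^2 := by
    have : (2*((a:ℂ)-(b:ℂ))*l*(x:ℂ)^2) = ((2:ℝ):ℂ) * ((a-b:ℝ):ℂ) * l * ((x^2:ℝ):ℂ) := by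
      push_cast; ring
    rw [this, norm_mul, norm_mul, norm_mul, Complex.norm_real, Complex.norm_real,
      Complex.norm_real, Real.norm_eq_abs, Real.norm_eq_abs, Real.norm_eq_abs]
    rw [abs_of_nonneg (by norm_num : (0:ℝ) ≤ 2), abs_of_nonneg (by positivity : (0:ℝ) ≤ x^2)]
  have hE_abs : ‖(4*(x:ℂ)^2*(lameA α β l x * lameB α l x
          - ((x : ℂ)^2 + (((a + b)/2 : ℝ) : ℂ) * l)) - (b:ℂ)^2*l^2)‖
      ≤ |a - b| * ‖l‖ * x^2 := by
    have h10 : ‖(4*(x:ℂ)^2*(lameA α β l x * lameB α l x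
          - ((x : ℂ)^2 + (((a + b)/2 : ℝ) : ℂ) * l)))‖
        = 4 * x^2 * ‖(lameA α β l x * lameB α l x
          - ((x : ℂ)^2 + (((a + b)/2 : ℝ) : ℂ) * l))‖ := by
      rw [norm_mul, norm_mul]
      have h4 : ‖(4:ℂ)‖ = 4 := by norm_num [Complex.norm_ofNat]
      have hx2 : ‖((x:ℂ)^2)‖ = x^2 := by
        rw [norm_pow, Complex.norm_real, Real.norm_eq_abs, abs_of_nonneg hx.le]
      rw [h4, hx2]
    have h11 : ‖((b:ℂ)^2*l^2)‖ = b^2 * (‖l‖)^2 := by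
      rw [norm_mul, norm_pow, norm_pow, Complex.norm_real, Real.norm_eq_abs, abs_of_nonneg hb.le]
    calc ‖(4*(x:ℂ)^2*(lameA α β l x * lameB α l x
          - ((x : ℂ)^2 + (((a + b)/2 : ℝ) : ℂ) * l)) - (b:ℂ)^2*l^2)‖
        ≤ ‖(4*(x:ℂ)^2*(lameA α β l x * lameB α l x
          - ((x : ℂ)^2 + (((a + b)/2 : ℝ) : ℂ) * l)))‖ + ‖((b:ℂ)^2*l^2)‖ := by
          exact norm_sub_le _ _
      _ ≤ |a - b| * ‖l‖ * x^2 := by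
          rw [h10, h11]
          have hKL : K * (‖l‖ * ‖l‖)
              = 2*(a-b)^2*(‖l‖)^2 + b^2*(‖l‖)^2 := by
            rw [hK_def]; ring
          have f2 := mul_le_mul_of_nonneg_left hlr (mul_nonneg hK.le hlabs)
          have f3 := mul_le_mul_of_nonneg_right hKr
            (mul_nonneg hlabs (sq_nonneg x))
          linarith [h9]
  -- conclusion
  rw [hiden]
  have htri : ‖(2*((a:ℂ)-(b:ℂ))*l*(x:ℂ)^2)‖
      - ‖(4*(x:ℂ)^2*(lameA α β l x * lameB α l x
          - ((x : ℂ)^2 + (((a + b)/2 : ℝ) : ℂ) * l)) - (b:ℂ)^2*l^2)‖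
      ≤ ‖(2*((a:ℂ)-(b:ℂ))*l*(x:ℂ)^2
        + (4*(x:ℂ)^2*(lameA α β l x * lameB α l x
          - ((x : ℂ)^2 + (((a + b)/2 : ℝ) : ℂ) * l)) - (b:ℂ)^2*l^2))‖ := by
    have := norm_sub_le (2*((a:ℂ)-(b:ℂ))*l*(x:ℂ)^2
        + (4*(x:ℂ)^2*(lameA α β l x * lameB α l x
          - ((x : ℂ)^2 + (((a + b)/2 : ℝ) : ℂ) * l)) - (b:ℂ)^2*l^2))
        ((4*(x:ℂ)^2*(lameA α β l x * lameB α l x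
          - ((x : ℂ)^2 + (((a + b)/2 : ℝ) : ℂ) * l)) - (b:ℂ)^2*l^2))
    rw [add_sub_cancel_right] at this
    linarith
  rw [hmain_abs] at htri
  linarith
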